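/- arXiv:2402.06407 — 5 statements merged into one kernel-verified Lean document; each statement's English description precedes it below -/
import Mathlib

section
/- Let G be a finite simple digraph on n vertices with independence number at most α ≥ 1. Then there exists a single vertex v of G whose in-degree and out-degree are both at least (n − 2α)/(4α). -/
variable {V : Type*}

def IsDicycle (A : V → V → Prop) : List V → Prop
  | [] => False
  | v :: l => (v :: l).Nodup ∧ List.Chain A v (l ++ [v])

def IsTournament (A : V → V → Prop) : Prop :=
  (∀ v, ¬ A v v) ∧ ∀ u v : V, u ≠ v → (A u v ↔ ¬ A v u)

def IndepNumLE (A : V → V → Prop) (α : ℕ) : Prop :=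
  ∀ I : Finset V, (∀ u ∈ I, ∀ v ∈ I, u ≠ v → ¬ A u v) → I.card ≤ α

noncomputable def outDeg (A : V → V → Prop) (v : V) : ℕ := {u | A v u}.ncard

noncomputable def inDeg (A : V → V → Prop) (v : V) : ℕ := {u | A u v}.ncard

def restrictRel (A : V → V → Prop) (S : Set V) : V → V → Prop :=
  fun u v => u ∈ S ∧ v ∈ S ∧ A u v

def cycleArcs : List V → List (V × V)
  | [] => []
  | v :: l => List.zip (v :: l) (l ++ [v])

def IsInducedDicycle (A : V → V → Prop) (l : List V) : Prop :=
  IsDicycle A l ∧ ∀ u ∈ l, ∀ v ∈ l, A u v → (u, v) ∈ cycleArcs l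

def IsFVS (A : V → V → Prop) (F : Set V) : Prop :=
  ∀ l, IsDicycle A l → ∃ v ∈ l, v ∈ F

def reachSet (A : V → V → Prop) (x : V) : Set V :=
  {y | y ≠ x ∧ Relation.TransGen A x y}

def HitsCyclesThrough (A : V → V → Prop) (S F : Set V) : Prop :=
  ∀ l, IsDicycle A l → (∃ v ∈ l, v ∈ S) → ∃ v ∈ l, v ∈ F


/-! Split the vertices according to whether out-degree ≥ in-degree; one side `S` has at least
`n / 2` vertices, and reversing all arcs lets us assume that it is the side where in-degree ≤
out-degree. The complement of the underlying graph of `S` has no clique of size `α + 1`, so by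
Turán's theorem the underlying graph, and hence `A` on `S`, has at least `m (m - α) / (2α)` arcs,
where `m = |S|`. Averaging, some `v ∈ S` has in-degree at least `(m - α) / (2α) ≥ (n - 2α) / (4α)`,
and its out-degree is at least as large. -/

open Finset

namespace SimpleGraph

theorem CliqueFree.two_mul_card_edgeFinset_le {W : Type*} [Fintype W] {G : SimpleGraph W}
    [DecidableRel G.Adj] {r : ℕ} (h : G.CliqueFree (r + 1)) (hr : 0 < r) :
    2 * r * #G.edgeFinset ≤ (r - 1) * Fintype.card W ^ 2 := by
  obtain ⟨H, _, hH⟩ := exists_isTuranMaximal (V := W) hr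
  calc 2 * r * #G.edgeFinset ≤ 2 * r * #H.edgeFinset := Nat.mul_le_mul_left _ (hH.2 h)
    _ = 2 * r * #(turanGraph (Fintype.card W) r).edgeFinset := by
      rw [hH.nonempty_iso_turanGraph.some.card_edgeFinset_eq]
    _ ≤ (r - 1) * Fintype.card W ^ 2 := mul_card_edgeFinset_turanGraph_le

end SimpleGraph

theorem IndepNumLE.cliqueFree_compl_fromRel {A : V → V → Prop} {α : ℕ} (h : IndepNumLE A α) :
    (SimpleGraph.fromRel A)ᶜ.CliqueFree (α + 1) := by
  rw [SimpleGraph.cliqueFree_compl]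
  intro I hI
  have := h I fun u hu v hv huv huv' =>
    hI.isIndepSet hu hv huv ((SimpleGraph.fromRel_adj _ _ _).2 ⟨huv, .inl huv'⟩)
  rw [hI.card_eq] at this
  omega

theorem sum_outDeg_eq_sum_inDeg [Fintype V] (A : V → V → Prop) :
    ∑ v, outDeg A v = ∑ v, inDeg A v := by
  classical
  simp only [outDeg, inDeg, Set.ncard_eq_toFinset_card', Set.toFinset_ofPred]
  exact sum_card_bipartiteAbove_eq_sum_card_bipartiteBelow (r := A)

theorem degree_fromRel_le [Fintype V] [DecidableEq V] (A : V → V → Prop) [DecidableRel A] (v : V) :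
    (SimpleGraph.fromRel A).degree v ≤ inDeg A v + outDeg A v := by
  rw [SimpleGraph.degree, SimpleGraph.neighborFinset_def, ← Set.ncard_eq_toFinset_card']
  refine (Set.ncard_le_ncard (t := {u | A u v} ∪ {u | A v u}) ?_).trans (Set.ncard_union_le _ _)
  rintro u ⟨-, hvu | huv⟩
  exacts [.inr hvu, .inl huv]

theorem IndepNumLE.card_sq_le [Fintype V] {A : V → V → Prop} {α : ℕ} (hα : 1 ≤ α)
    (h : IndepNumLE A α) :
    Fintype.card V ^ 2 ≤ α * Fintype.card V + 2 * α * ∑ v, inDeg A v := by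
  classical
  set G := SimpleGraph.fromRel A
  set m := Fintype.card V
  have hturan : α * ∑ v, Gᶜ.degree v ≤ (α - 1) * m ^ 2 := by
    rw [Gᶜ.sum_degrees_eq_twice_card_edges, ← mul_assoc, mul_comm α]
    exact h.cliqueFree_compl_fromRel.two_mul_card_edgeFinset_le hα
  have hcompl : ∑ v, (Gᶜ.degree v + G.degree v + 1) = m * m := by
    calc ∑ v, (Gᶜ.degree v + G.degree v + 1) = ∑ _v : V, m := sum_congr rfl fun v _ => by
          have := G.degree_lt_card_verts v
          rw [G.degree_compl]
          omega
      _ = m * m := by rw [sum_const, card_univ, smul_eq_mul]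
  rw [sum_add_distrib, sum_add_distrib, sum_const, card_univ, smul_eq_mul, mul_one] at hcompl
  have hdeg : ∑ v, G.degree v ≤ 2 * ∑ v, inDeg A v := by
    rw [two_mul]
    nth_rw 1 [← sum_outDeg_eq_sum_inDeg]
    rw [← sum_add_distrib]
    exact sum_le_sum fun v _ => (degree_fromRel_le A v).trans_eq (add_comm _ _)
  obtain ⟨k, rfl⟩ := Nat.exists_eq_add_of_le' hα
  have := congrArg ((k + 1) * ·) hcompl
  have := Nat.mul_le_mul_left (k + 1) hdeg
  simp only [Nat.add_sub_cancel] at hturan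
  linarith

theorem IndepNumLE.exists_card_le_inDeg [Fintype V] [Nonempty V] {A : V → V → Prop} {α : ℕ}
    (hα : 1 ≤ α) (h : IndepNumLE A α) :
    ∃ v, Fintype.card V ≤ α + 2 * α * inDeg A v := by
  obtain ⟨v, -, hv⟩ := exists_le_of_sum_le univ_nonempty
    (f := fun _ => Fintype.card V) (g := fun v => α + 2 * α * inDeg A v) <| by
      rw [sum_add_distrib, ← mul_sum, sum_const, sum_const, card_univ, smul_eq_mul,
        smul_eq_mul, ← sq, mul_comm]
      exact h.card_sq_le hα
  exact ⟨v, hv⟩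

theorem IndepNumLE.flip {A : V → V → Prop} {α : ℕ} (h : IndepNumLE A α) :
    IndepNumLE (flip A) α :=
  fun I hI => h I fun u hu v hv huv => hI v hv u hu huv.symm

theorem IndepNumLE.subtype {A : V → V → Prop} {α : ℕ} (h : IndepNumLE A α) (S : Set V) :
    IndepNumLE (fun u v : S => A u v) α := fun I hI => by
  simpa using h (I.map (Function.Embedding.subtype _)) <| by
    simp only [mem_map, Function.Embedding.coe_subtype]
    rintro _ ⟨u, hu, rfl⟩ _ ⟨v, hv, rfl⟩ huv
    exact hI u hu v hv (Subtype.coe_ne_coe.mp huv)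

theorem inDeg_subtype_le [Finite V] (A : V → V → Prop) (S : Set V) (v : S) :
    inDeg (fun u w : S => A u w) v ≤ inDeg A v := by
  rw [inDeg, ← Set.ncard_image_of_injective _ Subtype.val_injective]
  exact Set.ncard_le_ncard (by rintro _ ⟨u, hu, rfl⟩; exact hu)

theorem IndepNumLE.exists_mem_ncard_le_inDeg [Finite V] {A : V → V → Prop} {α : ℕ}
    (hα : 1 ≤ α) (h : IndepNumLE A α) {S : Set V} (hS : S.Nonempty) :
    ∃ v ∈ S, S.ncard ≤ α + 2 * α * inDeg A v := by
  have := Fintype.ofFinite S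
  have := hS.to_subtype
  obtain ⟨⟨v, hvS⟩, hv⟩ := (h.subtype S).exists_card_le_inDeg hα
  refine ⟨v, hvS, ?_⟩
  rw [← Nat.card_coe_set_eq, Nat.card_eq_fintype_card]
  exact hv.trans (by gcongr; exact inDeg_subtype_le A S ⟨v, hvS⟩)

theorem sub_div_le_of_le_add_mul {n α d : ℕ} (hα : 1 ≤ α) (h : n ≤ 2 * α + 4 * α * d) :
    ((n : ℚ) - 2 * α) / (4 * α) ≤ d := by
  have hα' : (0 : ℚ) < 4 * α := by positivity
  rw [div_le_iff₀ hα']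
  have : (n : ℚ) ≤ 2 * α + 4 * α * d := by exact_mod_cast h
  linarith

theorem IndepNumLE.exists_inDeg_ge_and_outDeg_ge [Fintype V] [Nonempty V] {A : V → V → Prop}
    {α : ℕ} (hα : 1 ≤ α) (h : IndepNumLE A α) {S : Set V} (hS : Fintype.card V ≤ 2 * S.ncard)
    (hle : ∀ v ∈ S, inDeg A v ≤ outDeg A v) :
    ∃ v : V, ((Fintype.card V : ℚ) - 2 * α) / (4 * α) ≤ inDeg A v ∧
      ((Fintype.card V : ℚ) - 2 * α) / (4 * α) ≤ outDeg A v := by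
  have hSne : S.Nonempty :=
    Set.nonempty_of_ncard_ne_zero (by have := Fintype.card_pos (α := V); omega)
  obtain ⟨v, hvS, hv⟩ := h.exists_mem_ncard_le_inDeg hα hSne
  have hin := sub_div_le_of_le_add_mul hα (n := Fintype.card V) (d := inDeg A v) (by linarith)
  exact ⟨v, hin, hin.trans (by exact_mod_cast hle v hvS)⟩

/-- A digraph with independence number at most α has a vertex whose in-degree and
out-degree are both at least (n-2α)/(4α). -/
theorem stmt3 [Fintype V] [Nonempty V] (A : V → V → Prop) (α : ℕ) (hα : 1 ≤ α)
    (hind : IndepNumLE A α) :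
    ∃ v : V, ((Fintype.card V : ℚ) - 2 * α) / (4 * α) ≤ inDeg A v ∧
      ((Fintype.card V : ℚ) - 2 * α) / (4 * α) ≤ outDeg A v := by
  set P := {v | inDeg A v ≤ outDeg A v}
  have hsplit : P.ncard + Pᶜ.ncard = Fintype.card V := by
    rw [Set.ncard_add_ncard_compl, Nat.card_eq_fintype_card]
  by_cases hP : Fintype.card V ≤ 2 * P.ncard
  · exact hind.exists_inDeg_ge_and_outDeg_ge hα hP fun v hv => hv
  · obtain ⟨v, hv⟩ := hind.flip.exists_inDeg_ge_and_outDeg_ge hα (S := Pᶜ) (by omega)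
      fun v (hv : ¬ inDeg A v ≤ outDeg A v) => (not_le.mp hv).le
    exact ⟨v, hv.symm⟩
end

section
/- Let G be a finite simple digraph with independence number at most α ≥ 1, let x be a vertex of G, and let C be a shortest directed cycle containing x. Then either C has length at most 2α + 1, or there exists an induced directed cycle C′ of G of length at most 2α whose vertex set is contained in V(C) \ {x}. -/
variable {V : Type*}

/-!
Write the shortest cycle through `x` as `v 0 = x, v 1, …, v (n - 1)`. By minimality there is no
forward chord `v a → v b` with `a + 1 < b ≤ n`, as it would shortcut the cycle. If `n ≥ 2α + 2`,
the `α + 1` vertices `v 0, v 2, …, v (2α)` span an arc, which can then only be a backward arc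
`v p → v q` with `1 ≤ q < p ≤ 2α`. A backward arc of minimal span among `v q, …, v p` closes an
induced cycle, which avoids `x`.
-/

section

variable {A : V → V → Prop}

theorem getElem_append_singleton_eq_getElem_succ_mod (v : V) (l : List V) (i : ℕ)
    (hi : i < (v :: l).length) :
    (l ++ [v])[i]'(by simpa using hi) =
      (v :: l)[(i + 1) % (v :: l).length]'(Nat.mod_lt _ (by simp)) := by
  rcases Nat.lt_or_ge i l.length with h | h
  · simp [Nat.mod_eq_of_lt (show i + 1 < l.length + 1 by omega), List.getElem_append_left h]
  · obtain rfl : i = l.length := by rw [List.length_cons] at hi; omega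
    simp

theorem isDicycle_iff_getElem {l : List V} :
    IsDicycle A l ↔ ∃ _ : l ≠ [], l.Nodup ∧
      ∀ i (hi : i < l.length), A l[i] (l[(i + 1) % l.length]'(Nat.mod_lt _ (by omega))) := by
  match l with
  | [] => simp [IsDicycle]
  | v :: l =>
    show (v :: l).Nodup ∧ List.IsChain A (v :: (l ++ [v])) ↔ _
    simp only [ne_eq, reduceCtorEq, not_false_eq_true, exists_const, and_congr_right_iff,
      List.isChain_iff_getElem]
    intro _
    have hfirst : ∀ i (hi : i < (v :: l).length),
        (v :: (l ++ [v]))[i]'(by simpa using Nat.lt_succ_of_lt hi) = (v :: l)[i] :=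
      fun i hi => List.getElem_append_left (bs := [v]) hi
    refine forall_congr' fun i => ⟨fun h hi => ?_, fun h hi => ?_⟩
    · rw [← hfirst i hi, ← getElem_append_singleton_eq_getElem_succ_mod]
      exacts [h (by simpa using hi), hi]
    · have hi' : i < (v :: l).length := by simpa using hi
      simp only [List.getElem_cons_succ, hfirst i hi',
        getElem_append_singleton_eq_getElem_succ_mod v l i hi']
      exact h hi'

theorem getElem_mem_cycleArcs (l : List V) (i : ℕ) (hi : i < l.length) :
    (l[i], l[(i + 1) % l.length]'(Nat.mod_lt _ (by omega))) ∈ cycleArcs l := by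
  match l with
  | [] => simp at hi
  | v :: l =>
    rw [cycleArcs, ← getElem_append_singleton_eq_getElem_succ_mod v l i hi]
    exact List.mem_iff_getElem.mpr ⟨i, by simpa using hi, by simp⟩

section Segment

variable {f : ℕ → V} {j m : ℕ}

theorem isDicycle_map_range' (hinj : Set.InjOn f (Set.Icc j (j + m)))
    (harc : ∀ t, j ≤ t → t < j + m → A (f t) (f (t + 1))) (hclose : A (f (j + m)) (f j)) :
    IsDicycle A ((List.range' j (m + 1)).map f) := by
  refine isDicycle_iff_getElem.mpr ⟨by simp, ?_, fun i hi => ?_⟩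
  · refine (List.nodup_range' 1).map_on fun a ha b hb hab => hinj ?_ ?_ hab <;>
      simp only [List.mem_range'_1] at ha hb <;> constructor <;> omega
  · simp only [List.length_map, List.length_range', List.getElem_map, List.getElem_range'] at hi ⊢
    rcases Nat.lt_or_ge i m with h | h
    · rw [Nat.mod_eq_of_lt (by omega)]
      exact harc _ (by omega) (by omega)
    · obtain rfl : i = m := by omega
      simpa using hclose

theorem mem_cycleArcs_map_range'_succ {t : ℕ} (hjt : j ≤ t) (htm : t < j + m) :
    (f t, f (t + 1)) ∈ cycleArcs ((List.range' j (m + 1)).map f) := by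
  have := getElem_mem_cycleArcs ((List.range' j (m + 1)).map f) (t - j)
    (by simp only [List.length_map, List.length_range']; omega)
  simpa [Nat.mod_eq_of_lt (show t - j + 1 < m + 1 by omega), show j + (t - j) = t by omega,
    show j + (t - j + 1) = t + 1 by omega] using this

theorem mem_cycleArcs_map_range'_last :
    (f (j + m), f j) ∈ cycleArcs ((List.range' j (m + 1)).map f) := by
  simpa using getElem_mem_cycleArcs ((List.range' j (m + 1)).map f) m (by simp)

end Segment

theorem exists_isInducedDicycle_of_backward_arc {f : ℕ → V} {q p : ℕ} (hqp : q ≤ p)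
    (hinj : Set.InjOn f (Set.Icc q p)) (harc : ∀ t, q ≤ t → t < p → A (f t) (f (t + 1)))
    (hfwd : ∀ a b, q ≤ a → a < b → b ≤ p → A (f a) (f b) → b = a + 1)
    (hback : A (f p) (f q)) :
    ∃ C : List V, IsInducedDicycle A C ∧ C.length ≤ p - q + 1 ∧
      ∀ u ∈ C, ∃ t, q ≤ t ∧ t ≤ p ∧ f t = u := by
  classical
  have hspan : ∃ s i, q ≤ i ∧ i + s ≤ p ∧ A (f (i + s)) (f i) :=
    ⟨p - q, q, le_rfl, by omega, by rwa [Nat.add_sub_cancel' hqp]⟩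
  obtain ⟨i, hqi, hip, hA⟩ := Nat.find_spec hspan
  set s := Nat.find hspan
  have hmem : ∀ u ∈ (List.range' i (s + 1)).map f, ∃ t, i ≤ t ∧ t ≤ i + s ∧ f t = u := by
    simp only [List.mem_map, List.mem_range'_1]
    rintro u ⟨t, ht, rfl⟩
    exact ⟨t, ht.1, by omega, rfl⟩
  refine ⟨(List.range' i (s + 1)).map f, ⟨?_, ?_⟩,
    by simp only [List.length_map, List.length_range']; omega, fun u hu => ?_⟩
  · exact isDicycle_map_range' (hinj.mono (Set.Icc_subset_Icc hqi hip))
      (fun t h1 h2 => harc t (by omega) (by omega)) hA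
  · intro u hu w hw huw
    obtain ⟨t₁, h₁, h₁', rfl⟩ := hmem u hu
    obtain ⟨t₂, h₂, h₂', rfl⟩ := hmem w hw
    rcases Nat.lt_or_ge t₁ t₂ with hlt | hle
    · obtain rfl := hfwd t₁ t₂ (by omega) hlt (by omega) huw
      exact mem_cycleArcs_map_range'_succ h₁ (by omega)
    · have hmin : s ≤ t₁ - t₂ :=
        Nat.find_min' hspan ⟨t₂, by omega, by omega, by rwa [Nat.add_sub_cancel' hle]⟩
      obtain rfl : t₂ = i := by omega
      obtain rfl : t₁ = t₂ + s := by omega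
      exact mem_cycleArcs_map_range'_last
  · obtain ⟨t, h1, h2, rfl⟩ := hmem u hu
    exact ⟨t, by omega, by omega, rfl⟩

structure TracesDicycle (A : V → V → Prop) (n : ℕ) (v : ℕ → V) : Prop where
  arc : ∀ t, A (v t) (v (t + 1))
  periodic : Function.Periodic v n
  injOn : Set.InjOn v (Set.Iio n)

theorem IsDicycle.exists_tracesDicycle {C : List V} (hC : IsDicycle A C) {x : V} (hx : x ∈ C) :
    ∃ v : ℕ → V, v 0 = x ∧ (∀ t, v t ∈ C) ∧ TracesDicycle A C.length v := by
  obtain ⟨hne, hnodup, harc⟩ := isDicycle_iff_getElem.mp hC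
  obtain ⟨k, hk, rfl⟩ := List.getElem_of_mem hx
  have hpos : 0 < C.length := List.length_pos_of_ne_nil hne
  refine ⟨fun t => C[(k + t) % C.length]'(Nat.mod_lt _ hpos), by simp [Nat.mod_eq_of_lt hk],
    fun t => List.getElem_mem _, ⟨fun t => ?_, fun t => ?_, fun s hs t ht hst => ?_⟩⟩
  · simpa [Nat.add_mod_mod, Nat.add_assoc] using harc ((k + t) % C.length) (Nat.mod_lt _ hpos)
  · simp [← Nat.add_assoc]
  · have hmod : k + s ≡ k + t [MOD C.length] := hnodup.getElem_inj_iff.mp hst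
    simpa [Nat.ModEq, Nat.mod_eq_of_lt hs, Nat.mod_eq_of_lt (show t < C.length from ht)] using
      Nat.ModEq.add_left_cancel' k hmod

namespace TracesDicycle

variable {n : ℕ} {v : ℕ → V}

theorem injOn_Icc (h : TracesDicycle A n v) {j m : ℕ} (hm : m < n) :
    Set.InjOn v (Set.Icc j (j + m)) := by
  have hmod : ∀ {s t}, v s = v t → s % n = t % n := fun {s t} hst =>
    h.injOn (Nat.mod_lt s (by omega)) (Nat.mod_lt t (by omega))
      (by rwa [h.periodic.map_mod_nat, h.periodic.map_mod_nat])
  have key : ∀ {s t}, s ∈ Set.Icc j (j + m) → t ∈ Set.Icc j (j + m) → s ≤ t → v s = v t →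
      s = t := fun {s t} hs ht hst hv => by
    have hdiff : (t - s) % n = 0 := Nat.sub_mod_eq_zero_of_mod_eq (hmod hv).symm
    rw [Nat.mod_eq_of_lt (by simp only [Set.mem_Icc] at hs ht; omega)] at hdiff
    omega
  intro s hs t ht hv
  rcases le_total s t with hst | hts
  exacts [key hs ht hst hv, (key ht hs hts hv.symm).symm]

theorem eq_succ_of_arc (h : TracesDicycle A n v)
    (hmin : ∀ l : List V, IsDicycle A l → v 0 ∈ l → n ≤ l.length) {a b : ℕ} (hab : a < b)
    (hbn : b ≤ n) (hA : A (v a) (v b)) : b = a + 1 := by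
  have hclose : A (v (b + (n - b + a))) (v b) := by
    rwa [show b + (n - b + a) = a + n by omega, h.periodic]
  have hcyc := isDicycle_map_range' (h.injOn_Icc (j := b) (show n - b + a < n by omega))
    (fun t _ _ => h.arc t) hclose
  have hx : v 0 ∈ (List.range' b (n - b + a + 1)).map v :=
    List.mem_map.mpr ⟨n, List.mem_range'_1.mpr ⟨hbn, by omega⟩, h.periodic.eq⟩
  have := hmin _ hcyc hx
  simp only [List.length_map, List.length_range'] at this
  omega

theorem exists_backward_arc (h : TracesDicycle A n v)
    (hfwd : ∀ a b, a < b → b ≤ n → A (v a) (v b) → b = a + 1) {α : ℕ}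
    (hind : IndepNumLE A α) (hn : 2 * α + 1 < n) :
    ∃ q p, 1 ≤ q ∧ q ≤ p ∧ p ≤ 2 * α ∧ A (v p) (v q) := by
  classical
  have hinj : Set.InjOn (fun i => v (2 * i)) (Finset.range (α + 1)) := by
    intro i hi j hj hij
    simp only [Finset.coe_range, Set.mem_Iio] at hi hj
    simpa using h.injOn (show 2 * i < n by omega) (show 2 * j < n by omega) hij
  obtain ⟨_, hu, _, hw, huw, hA⟩ : ∃ u ∈ (Finset.range (α + 1)).image (fun i => v (2 * i)),
      ∃ w ∈ (Finset.range (α + 1)).image (fun i => v (2 * i)), u ≠ w ∧ A u w := by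
    by_contra! hI
    have := hind _ hI
    rw [Finset.card_image_of_injOn hinj, Finset.card_range] at this
    omega
  simp only [Finset.mem_image, Finset.mem_range] at hu hw
  obtain ⟨i, hi, rfl⟩ := hu
  obtain ⟨j, hj, rfl⟩ := hw
  rcases lt_trichotomy i j with hij | rfl | hji
  · have := hfwd _ _ (show 2 * i < 2 * j by omega) (by omega) hA
    omega
  · exact absurd rfl huw
  · rcases Nat.eq_zero_or_pos j with rfl | hj0
    · have := hfwd (2 * i) n (by omega) le_rfl (by rwa [h.periodic.eq])
      omega
    · exact ⟨2 * j, 2 * i, by omega, by omega, by omega, hA⟩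

end TracesDicycle

end

theorem stmt6_general (A : V → V → Prop) (α : ℕ) (hind : IndepNumLE A α)
    (x : V) (C : List V) (hC : IsDicycle A C) (hxC : x ∈ C)
    (hmin : ∀ l : List V, IsDicycle A l → x ∈ l → C.length ≤ l.length) :
    C.length ≤ 2 * α + 1 ∨
      ∃ C' : List V, IsInducedDicycle A C' ∧ C'.length ≤ 2 * α ∧
        ∀ v ∈ C', v ∈ C ∧ v ≠ x := by
  refine or_iff_not_imp_left.mpr fun hlong => ?_
  obtain ⟨v, rfl, hvC, hv⟩ := hC.exists_tracesDicycle hxC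
  have hfwd : ∀ a b, a < b → b ≤ C.length → A (v a) (v b) → b = a + 1 := fun _ _ =>
    hv.eq_succ_of_arc hmin
  obtain ⟨q, p, hq, hqp, hp, hback⟩ := hv.exists_backward_arc hfwd hind (by omega)
  obtain ⟨C', hC', hlen, hmem⟩ := exists_isInducedDicycle_of_backward_arc hqp
    (hv.injOn.mono fun t ht => show t < C.length by rw [Set.mem_Icc] at ht; omega)
    (fun t _ _ => hv.arc t)
    (fun a b _ hab hb => hfwd a b hab (by omega)) hback
  refine ⟨C', hC', by omega, fun u hu => ?_⟩
  obtain ⟨t, hqt, htp, rfl⟩ := hmem u hu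
  refine ⟨hvC t, fun h0 => ?_⟩
  have := hv.injOn (show t < C.length by omega) (show 0 < C.length by omega) h0
  omega

/-- If C is a shortest directed cycle containing x in a digraph with independence
number at most α, then |C| ≤ 2α+1 or there is an induced cycle C' of length at most
2α with vertices inside V(C) \ {x}. -/
theorem stmt6 (A : V → V → Prop) (α : ℕ) (hα : 1 ≤ α) (hind : IndepNumLE A α)
    (x : V) (C : List V) (hC : IsDicycle A C) (hxC : x ∈ C)
    (hmin : ∀ l : List V, IsDicycle A l → x ∈ l → C.length ≤ l.length) :
    C.length ≤ 2 * α + 1 ∨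
      ∃ C' : List V, IsInducedDicycle A C' ∧ C'.length ≤ 2 * α ∧
        ∀ v ∈ C', v ∈ C ∧ v ≠ x :=
  stmt6_general A α hind x C hC hxC hmin
end

section
/- Let G be a digraph and x a vertex that lies on no directed cycle of G. Let R = R_G(x) be the set of vertices other than x reachable from x, and R̄ = V(G) \ (R ∪ {x}). Then a set F ⊆ V(G) is a feedback vertex set of G if and only if F ∩ R is a feedback vertex set of G[R] and F ∩ R̄ is a feedback vertex set of G[R̄]. -/
/-! The vertices of a directed cycle are mutually reachable. So a cycle through a vertex of `R`
lies inside `R` (it avoids `x`), and a cycle missing `R` lies inside `R̄`. Every cycle of `G` is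
therefore a cycle of `G[R]` or of `G[R̄]`, and the cycles of an induced subdigraph `G[S]` are exactly
the cycles of `G` contained in `S`. -/

variable {V : Type*}

namespace IsDicycle

variable {r : V → V → Prop} {l : List V}

theorem isChain_cons_append {v : V} {t : List V} (hl : IsDicycle r (v :: t)) :
    List.IsChain r ((v :: t) ++ [v]) :=
  hl.2

theorem exists_rel (hl : IsDicycle r l) {z : V} (hz : z ∈ l) : ∃ y, r z y := by
  obtain _ | ⟨v, t⟩ := l
  · exact hl.elim
  have hv : ∃ y, r v y := by
    cases t <;> exact ⟨_, (List.isChain_cons_cons.mp hl.2).1⟩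
  exact hl.isChain_cons_append.backwards_concat_induction (fun z => ∃ y, r z y) _
    (fun _ y h _ => ⟨y, h⟩) hv z hz

theorem reflTransGen (hl : IsDicycle r l) {y z : V} (hy : y ∈ l) (hz : z ∈ l) :
    Relation.ReflTransGen r y z := by
  obtain _ | ⟨v, t⟩ := l
  · exact hl.elim
  have hyv : Relation.ReflTransGen r y v :=
    hl.isChain_cons_append.backwards_concat_induction (Relation.ReflTransGen r · v) _
      (fun _ _ h h' => h'.head h) .refl y hy
  have hvz : Relation.ReflTransGen r v z :=
    hl.2.induction (Relation.ReflTransGen r v ·) _ (fun _ _ h h' => h'.tail h) (fun _ => .refl) z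
      (List.mem_cons.mpr ((List.mem_cons.mp hz).imp id (List.mem_append_left _)))
  exact hyv.trans hvz

end IsDicycle

theorem isDicycle_restrictRel_iff {A : V → V → Prop} {S : Set V} {l : List V} :
    IsDicycle (restrictRel A S) l ↔ IsDicycle A l ∧ ∀ v ∈ l, v ∈ S := by
  refine ⟨fun hl => ⟨?_, fun v hv => (hl.exists_rel hv).elim fun _ h => h.1⟩, fun ⟨hl, hS⟩ => ?_⟩
  · obtain _ | ⟨v, t⟩ := l
    · exact hl.elim
    exact ⟨hl.1, hl.isChain_cons_append.imp fun _ _ h => h.2.2⟩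
  · obtain _ | ⟨v, t⟩ := l
    · exact hl.elim
    have hS' : ∀ a ∈ (v :: t) ++ [v], a ∈ S := fun a ha =>
      (List.mem_append.mp ha).elim (hS a) fun h => List.mem_singleton.mp h ▸ hS v List.mem_cons_self
    exact ⟨hl.1, hl.isChain_cons_append.imp_of_mem_imp fun a b ha hb hab => ⟨hS' a ha, hS' b hb, hab⟩⟩

theorem isFVS_restrictRel_inter_iff {A : V → V → Prop} {S F : Set V} :
    IsFVS (restrictRel A S) (F ∩ S) ↔
      ∀ l, IsDicycle A l → (∀ v ∈ l, v ∈ S) → ∃ v ∈ l, v ∈ F := by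
  simp only [IsFVS, isDicycle_restrictRel_iff, and_imp, Set.mem_inter_iff]
  exact forall_congr' fun l => forall₂_congr fun _ hS =>
    ⟨fun ⟨v, hv, hF, _⟩ => ⟨v, hv, hF⟩, fun ⟨v, hv, hF⟩ => ⟨v, hv, hF, hS v hv⟩⟩

theorem isFVS_iff_of_dicycle_subset_or_subset {A : V → V → Prop} {S T F : Set V}
    (hST : ∀ l, IsDicycle A l → (∀ v ∈ l, v ∈ S) ∨ ∀ v ∈ l, v ∈ T) :
    IsFVS A F ↔ IsFVS (restrictRel A S) (F ∩ S) ∧ IsFVS (restrictRel A T) (F ∩ T) := by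
  simp only [isFVS_restrictRel_inter_iff]
  exact ⟨fun h => ⟨fun l hl _ => h l hl, fun l hl _ => h l hl⟩,
    fun ⟨hS, hT⟩ l hl => (hST l hl).elim (hS l hl) (hT l hl)⟩

theorem IsDicycle.subset_reachSet_or_subset_compl {A : V → V → Prop} {x : V} {l : List V}
    (hl : IsDicycle A l) (hx : x ∉ l) :
    (∀ v ∈ l, v ∈ reachSet A x) ∨ ∀ v ∈ l, v ∈ (reachSet A x ∪ {x})ᶜ := by
  by_cases hR : ∃ y ∈ l, y ∈ reachSet A x
  · obtain ⟨y, hy, -, hxy⟩ := hR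
    exact .inl fun z hz => ⟨fun h => hx (h ▸ hz), hxy.trans_left (hl.reflTransGen hy hz)⟩
  · push Not at hR
    exact .inr fun z hz => by
      simp only [Set.mem_compl_iff, Set.mem_union, Set.mem_singleton_iff, not_or]
      exact ⟨hR z hz, fun h => hx (h ▸ hz)⟩

/-- If x lies on no directed cycle, then F is an FVS of G iff F ∩ R is an FVS of
G[R] and F ∩ R̄ is an FVS of G[R̄]. -/
theorem stmt10 (A : V → V → Prop) (x : V)
    (hx : ∀ l : List V, IsDicycle A l → x ∉ l) (F : Set V) :
    IsFVS A F ↔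
      IsFVS (restrictRel A (reachSet A x)) (F ∩ reachSet A x) ∧
      IsFVS (restrictRel A (reachSet A x ∪ {x})ᶜ) (F ∩ (reachSet A x ∪ {x})ᶜ) :=
  isFVS_iff_of_dicycle_subset_or_subset fun l hl => hl.subset_reachSet_or_subset_compl (hx l hl)
end

section
/- Let T be a tournament, S ⊆ V(T), and x ∈ S a vertex lying on no directed triangle of T. Then x lies on no directed cycle of T, and a set F ⊆ V(T) hits all directed cycles of T meeting S if and only if F ∩ R hits all directed cycles of T[R] meeting S ∩ R and F ∩ R̄ hits all directed cycles of T[R̄] meeting S ∩ R̄, where R = R_T(x) is the set of vertices other than x reachable from x and R̄ = V(T) \ (R ∪ {x}). -/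
variable {V : Type*}

/-!
If `x` lies on no directed triangle of a tournament, then its out-neighbourhood is closed under
taking out-neighbours other than `x` (an arc `x → y → z` with `z → x` would be a triangle), so
every vertex reachable from `x` is an out-neighbour of `x`; hence no arc returns to `x` and `x` is
on no directed cycle. A directed cycle avoiding `x` that meets `R = R_T(x)` stays inside `R`, since
all its vertices are reachable from each other; so every directed cycle through `S` lies inside
`T[R]` or inside `T[R̄]`, and hitting them splits into the two subproblems.
-/

open Relation

theorem List.IsChain.transGen_of_mem {α : Type*} {r : α → α → Prop} {a b : α} :
    ∀ {l : List α}, IsChain r (a :: l) → b ∈ l → TransGen r a b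
  | c :: _, h, hb => by
    rw [isChain_cons_cons] at h
    rcases mem_cons.1 hb with rfl | hb
    · exact .single h.1
    · exact .head h.1 (h.2.transGen_of_mem hb)

variable {A B : V → V → Prop}

namespace IsDicycle

theorem transGen {l : List V} (hl : IsDicycle A l) {u w : V} (hu : u ∈ l) (hw : w ∈ l) :
    TransGen A u w := by
  match l, hl with
  | v :: l, ⟨_, hchain⟩ =>
    have hu_v : ReflTransGen A u v :=
      List.IsChain.backwards_cons_induction (ReflTransGen A · v) _ hchain (by simp)
        (fun _ _ => ReflTransGen.head) .refl u
        (List.cons_subset_cons v (List.subset_append_left l [v]) hu)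
    have hw' : w ∈ l ++ [v] := by
      rcases List.mem_cons.1 hw with rfl | hw
      · exact List.mem_append_right _ (List.mem_singleton_self _)
      · exact List.mem_append_left _ hw
    exact .trans_right hu_v (List.IsChain.transGen_of_mem hchain hw')

theorem mono {l : List V} (hl : IsDicycle A l) (h : ∀ a b, A a b → B a b) : IsDicycle B l := by
  match l, hl with
  | _ :: _, ⟨hnodup, hchain⟩ => exact ⟨hnodup, List.IsChain.imp h hchain⟩

theorem mem_of_restrictRel {W : Set V} {l : List V} (hl : IsDicycle (restrictRel A W) l)
    {u : V} (hu : u ∈ l) : u ∈ W := by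
  obtain ⟨_, _, h⟩ := TransGen.tail'_iff.1 (hl.transGen hu hu)
  exact h.2.1

theorem restrict {W : Set V} {l : List V} (hl : IsDicycle A l) (hW : ∀ u ∈ l, u ∈ W) :
    IsDicycle (restrictRel A W) l := by
  match l, hl with
  | v :: l, ⟨hnodup, hchain⟩ =>
    have hmem : ∀ u ∈ v :: (l ++ [v]), u ∈ W := fun u hu =>
      hW u (by simp only [List.mem_cons, List.mem_append] at hu ⊢; tauto)
    exact ⟨hnodup,
      List.IsChain.imp_of_mem_imp (fun a b ha hb hab => ⟨hmem a ha, hmem b hb, hab⟩) hchain⟩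

theorem triple (hirr : ∀ v, ¬ A v v) {x y z : V} (hxy : A x y) (hyz : A y z) (hzx : A z x) :
    IsDicycle A [x, y, z] := by
  have hne : ∀ {a b}, A a b → a ≠ b := fun h hab => hirr _ (hab ▸ h)
  refine ⟨?_, ?_⟩
  · simp [hne hxy, hne hyz, (hne hzx).symm]
  · show List.IsChain A [x, y, z, x]
    simp [hxy, hyz, hzx]

theorem subset_reachSet_or_subset_compl_s11 {l : List V} (hl : IsDicycle A l) {x : V} (hx : x ∉ l) :
    (∀ u ∈ l, u ∈ reachSet A x) ∨ (∀ u ∈ l, u ∈ (reachSet A x ∪ {x})ᶜ) := by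
  by_cases hR : ∃ u ∈ l, u ∈ reachSet A x
  · obtain ⟨u, hu, huR⟩ := hR
    exact .inl fun w hw => ⟨fun h => hx (h ▸ hw), huR.2.trans (hl.transGen hu hw)⟩
  · push Not at hR
    refine .inr fun w hw hmem => ?_
    rcases hmem with hwR | rfl
    exacts [hR w hw hwR, hx hw]

end IsDicycle

theorem HitsCyclesThrough.restrict {S F : Set V} (h : HitsCyclesThrough A S F) (W : Set V) :
    HitsCyclesThrough (restrictRel A W) (S ∩ W) (F ∩ W) := by
  rintro l hl ⟨v₀, hv₀, hv₀S, -⟩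
  obtain ⟨v, hv, hvF⟩ := h l (hl.mono fun _ _ hab => hab.2.2) ⟨v₀, hv₀, hv₀S⟩
  exact ⟨v, hv, hvF, hl.mem_of_restrictRel hv⟩

theorem HitsCyclesThrough.exists_mem_of_restrict {S F W : Set V}
    (h : HitsCyclesThrough (restrictRel A W) (S ∩ W) (F ∩ W)) {l : List V} (hl : IsDicycle A l)
    (hW : ∀ u ∈ l, u ∈ W) (hS : ∃ v ∈ l, v ∈ S) : ∃ v ∈ l, v ∈ F := by
  obtain ⟨v₀, hv₀, hv₀S⟩ := hS
  obtain ⟨v, hv, hvF, -⟩ := h l (hl.restrict hW) ⟨v₀, hv₀, hv₀S, hW v₀ hv₀⟩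
  exact ⟨v, hv, hvF⟩

theorem hitsCyclesThrough_iff_of_forall_dicycle {S F W₁ W₂ : Set V}
    (hsplit : ∀ l, IsDicycle A l → (∀ u ∈ l, u ∈ W₁) ∨ (∀ u ∈ l, u ∈ W₂)) :
    HitsCyclesThrough A S F ↔
      HitsCyclesThrough (restrictRel A W₁) (S ∩ W₁) (F ∩ W₁) ∧
      HitsCyclesThrough (restrictRel A W₂) (S ∩ W₂) (F ∩ W₂) := by
  refine ⟨fun h => ⟨h.restrict W₁, h.restrict W₂⟩, fun ⟨h₁, h₂⟩ l hl hS => ?_⟩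
  rcases hsplit l hl with hW | hW
  exacts [HitsCyclesThrough.exists_mem_of_restrict h₁ hl hW hS,
    HitsCyclesThrough.exists_mem_of_restrict h₂ hl hW hS]

namespace IsTournament

variable {x : V}

theorem adj_of_adj_of_adj (hT : IsTournament A)
    (hx : ∀ l : List V, IsDicycle A l → l.length = 3 → x ∉ l) {y z : V}
    (hxy : A x y) (hyz : A y z) (hzx : z ≠ x) : A x z := by
  by_contra hxz
  exact hx _ (.triple hT.1 hxy hyz ((hT.2 z x hzx).2 hxz)) rfl List.mem_cons_self

theorem adj_of_transGen (hT : IsTournament A)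
    (hx : ∀ l : List V, IsDicycle A l → l.length = 3 → x ∉ l) {y : V}
    (hxy : TransGen A x y) (hyx : y ≠ x) : A x y := by
  induction hxy with
  | single h => exact h
  | @tail b c _ hbc ih =>
    by_cases hbx : b = x
    · exact hbx ▸ hbc
    · exact hT.adj_of_adj_of_adj hx (ih hbx) hbc hyx

theorem notMem_of_isDicycle (hT : IsTournament A)
    (hx : ∀ l : List V, IsDicycle A l → l.length = 3 → x ∉ l) {l : List V}
    (hl : IsDicycle A l) : x ∉ l := by
  intro hxl
  obtain ⟨b, hxb, hbx⟩ := TransGen.tail'_iff.1 (hl.transGen hxl hxl)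
  have hbx' : b ≠ x := fun h => hT.1 x (h ▸ hbx)
  have hxb' : TransGen A x b := (reflTransGen_iff_eq_or_transGen.1 hxb).resolve_left hbx'
  exact (hT.2 b x hbx').1 hbx (hT.adj_of_transGen hx hxb' hbx')

end IsTournament

theorem stmt11_general (A : V → V → Prop) (hT : IsTournament A) (S : Set V) (x : V)
    (hx : ∀ l : List V, IsDicycle A l → l.length = 3 → x ∉ l) (F : Set V) :
    (∀ l : List V, IsDicycle A l → x ∉ l) ∧
    (HitsCyclesThrough A S F ↔
      HitsCyclesThrough (restrictRel A (reachSet A x))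
        (S ∩ reachSet A x) (F ∩ reachSet A x) ∧
      HitsCyclesThrough (restrictRel A (reachSet A x ∪ {x})ᶜ)
        (S ∩ (reachSet A x ∪ {x})ᶜ) (F ∩ (reachSet A x ∪ {x})ᶜ)) := by
  have hnot : ∀ l : List V, IsDicycle A l → x ∉ l := fun l hl => hT.notMem_of_isDicycle hx hl
  exact ⟨hnot, hitsCyclesThrough_iff_of_forall_dicycle fun l hl =>
    hl.subset_reachSet_or_subset_compl_s11 (hnot l hl)⟩

/-- In a tournament, if x ∈ S lies on no directed triangle, then x lies on no
directed cycle, and hitting all cycles meeting S decomposes into the two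
subproblems on R and its complement. -/
theorem stmt11 (A : V → V → Prop) (hT : IsTournament A) (S : Set V) (x : V)
    (hxS : x ∈ S)
    (hx : ∀ l : List V, IsDicycle A l → l.length = 3 → x ∉ l) (F : Set V) :
    (∀ l : List V, IsDicycle A l → x ∉ l) ∧
    (HitsCyclesThrough A S F ↔
      HitsCyclesThrough (restrictRel A (reachSet A x))
        (S ∩ reachSet A x) (F ∩ reachSet A x) ∧
      HitsCyclesThrough (restrictRel A (reachSet A x ∪ {x})ᶜ)
        (S ∩ (reachSet A x ∪ {x})ᶜ) (F ∩ (reachSet A x ∪ {x})ᶜ)) :=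
  stmt11_general A hT S x hx F
end

section
/- Let G be a digraph on n vertices, F a feedback vertex set of G with |F| < 2n/(3α) for some α ≥ 1, and let σ = ⟨v_1, ..., v_{n−|F|}⟩ be an HL-degree ordering of G − F (so v_j has in- and out-degree at least (n − |F| − (j−1) − 2α)/(4α) in (G−F) − {v_1,...,v_{j−1}}). If x is among the first ⌊(n−|F|)/3⌋ vertices of σ, then both the in-degree and the out-degree of x in G are at least n/(18α) + 1/(4α) − 1/2. -/
variable {V : Type*}

/-- If F is an FVS of G with |F| < 2n/(3α) and x is among the first ⌊(n-|F|)/3⌋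
vertices of an HL-degree ordering of G - F, then both degrees of x in G are at
least n/(18α) + 1/(4α) - 1/2. -/
theorem stmt15 [Fintype V] [DecidableEq V] (A : V → V → Prop) (α : ℝ) (hα : 1 ≤ α)
    (F : Finset V) (hF : IsFVS A ↑F)
    (hFsmall : (F.card : ℝ) < 2 * (Fintype.card V) / (3 * α))
    (l : List V) (hnd : l.Nodup) (hl : l.toFinset = Finset.univ \ F)
    (hHL : ∀ (j : ℕ) (hj : j < l.length),
      ((Fintype.card V : ℝ) - F.card - j - 2 * α) / (4 * α) ≤
        inDeg (restrictRel A
          {v | ∃ (k : ℕ) (hk : k < l.length), j ≤ k ∧ l.get ⟨k, hk⟩ = v})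
          (l.get ⟨j, hj⟩) ∧
      ((Fintype.card V : ℝ) - F.card - j - 2 * α) / (4 * α) ≤
        outDeg (restrictRel A
          {v | ∃ (k : ℕ) (hk : k < l.length), j ≤ k ∧ l.get ⟨k, hk⟩ = v})
          (l.get ⟨j, hj⟩))
    (x : V) (k : ℕ) (hk : k < l.length)
    (hk3 : k < (Fintype.card V - F.card) / 3)
    (hx : l.get ⟨k, hk⟩ = x) :
    (Fintype.card V : ℝ) / (18 * α) + 1 / (4 * α) - 1 / 2 ≤ inDeg A x ∧
    (Fintype.card V : ℝ) / (18 * α) + 1 / (4 * α) - 1 / 2 ≤ outDeg A x := by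
  have hα0 : (0:ℝ) < α := by linarith
  have hFle : F.card ≤ Fintype.card V := Finset.card_le_univ F
  have hf3 : 3 * (F.card : ℝ) ≤ 2 * (Fintype.card V) := by
    rw [lt_div_iff₀ (by linarith : (0:ℝ) < 3 * α)] at hFsmall
    nlinarith [Nat.cast_nonneg (α := ℝ) F.card]
  have hkm : 3 * (k:ℝ) + 3 ≤ (Fintype.card V : ℝ) - F.card := by
    have h1 : 3*k+3 ≤ Fintype.card V - F.card := by omega
    have h2 : ((3*k+3 : ℕ):ℝ) ≤ ((Fintype.card V - F.card : ℕ):ℝ) := Nat.cast_le.mpr h1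
    rw [Nat.cast_sub hFle] at h2
    push_cast at h2
    linarith
  have key : (Fintype.card V : ℝ)/(18*α) + 1/(4*α) - 1/2 ≤
      ((Fintype.card V : ℝ) - F.card - k - 2*α)/(4*α) := by
    rw [← sub_nonneg]
    have heq : ((Fintype.card V : ℝ) - F.card - k - 2*α)/(4*α) -
        ((Fintype.card V : ℝ)/(18*α) + 1/(4*α) - 1/2)
        = (7*(Fintype.card V : ℝ) - 9*F.card - 9*k - 9)/(36*α) := by
      field_simp
      ring
    rw [heq]
    apply div_nonneg _ (by linarith)
    linarith
  obtain ⟨hin, hout⟩ := hHL k hk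
  rw [hx] at hin hout
  constructor
  · refine le_trans key (le_trans hin ?_)
    have : inDeg (restrictRel A
        {v | ∃ (k' : ℕ) (hk' : k' < l.length), k ≤ k' ∧ l.get ⟨k', hk'⟩ = v}) x ≤ inDeg A x :=
      Set.ncard_le_ncard (fun u hu => hu.2.2) (Set.toFinite _)
    exact_mod_cast this
  · refine le_trans key (le_trans hout ?_)
    have : outDeg (restrictRel A
        {v | ∃ (k' : ℕ) (hk' : k' < l.length), k ≤ k' ∧ l.get ⟨k', hk'⟩ = v}) x ≤ outDeg A x :=
      Set.ncard_le_ncard (fun u hu => hu.2.2) (Set.toFinite _)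
    exact_mod_cast this
end
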